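/- arXiv:2010.10667 — 7 statements merged into one kernel-verified Lean document; each statement's English description precedes it below -/
import Mathlib

section
/- Let P be a countable partial order and f : P → P a self-map that preserves joins of increasing chains (that is, for every chain c₁ ⊑ c₂ ⊑ ⋯ whose join exists, f(⋁ᵢ cᵢ) = ⋁ᵢ f(cᵢ)). Then f is continuous, i.e., f preserves the join of every directed subset of P whose join exists. -/
/-- On a countable poset, a self-map preserving joins of increasing chains is
continuous: it preserves the join of every directed set whose join exists. -/
theorem stmt_3 {P : Type*} [PartialOrder P] [Countable P] (f : P → P)
    (hchain : ∀ c : ℕ → P, Monotone c → ∀ s, IsLUB (Set.range c) s →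
      IsLUB (Set.range (fun n => f (c n))) (f s)) :
    ∀ D : Set P, D.Nonempty → DirectedOn (· ≤ ·) D → ∀ s, IsLUB D s →
      IsLUB (f '' D) (f s) := by
  classical
  -- f is monotone
  have hmono : Monotone f := by
    intro a b hab
    have hcm : Monotone (fun n : ℕ => if n = 0 then a else b) := by
      intro m n hmn
      show (if m = 0 then a else b) ≤ (if n = 0 then a else b)
      split_ifs with h1 h2 h2
      · exact le_refl a
      · exact hab
      · exact absurd (Nat.le_zero.mp (h2 ▸ hmn)) h1
      · exact le_refl b
    have hlub : IsLUB (Set.range (fun n : ℕ => if n = 0 then a else b)) b := by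
      constructor
      · rintro x ⟨n, rfl⟩
        show (if n = 0 then a else b) ≤ b
        split_ifs
        · exact hab
        · exact le_refl b
      · intro x hx
        exact hx ⟨1, rfl⟩
    exact (hchain _ hcm b hlub).1 ⟨0, rfl⟩
  intro D hne hdir s hs
  obtain ⟨d0, hd0⟩ := hne
  have : Nonempty P := ⟨d0⟩
  obtain ⟨e, he⟩ := exists_surjective_nat P
  choose u hu hau hbu using hdir
  -- build a cofinal monotone chain in D
  let step : ∀ _ : ℕ, D → D := fun n p =>
    if h : e n ∈ D then ⟨u p p.2 (e n) h, hu p p.2 (e n) h⟩ else p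
  let g : ℕ → D := fun n => Nat.rec ⟨d0, hd0⟩ step n
  have hsucc : ∀ n, g (n + 1) = step n (g n) := fun n => rfl
  have hgm : Monotone (fun n => (g n).1) := by
    apply monotone_nat_of_le_succ
    intro n
    rw [hsucc n]
    show (g n).1 ≤ (if h : e n ∈ D then (⟨u (g n).1 (g n).2 (e n) h, hu (g n).1 (g n).2 (e n) h⟩ : D) else g n).1
    split_ifs with h
    · exact hau (g n).1 (g n).2 (e n) h
    · exact le_refl _
  have hcof : ∀ d ∈ D, ∃ n, d ≤ (g n).1 := by
    intro d hd
    obtain ⟨n, rfl⟩ := he d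
    refine ⟨n + 1, ?_⟩
    rw [hsucc n]
    show e n ≤ (if h : e n ∈ D then (⟨u (g n).1 (g n).2 (e n) h, hu (g n).1 (g n).2 (e n) h⟩ : D) else g n).1
    rw [dif_pos hd]
    exact hbu (g n).1 (g n).2 (e n) hd
  have hglub : IsLUB (Set.range (fun n => (g n).1)) s := by
    constructor
    · rintro x ⟨n, rfl⟩
      exact hs.1 (g n).2
    · intro x hx
      apply hs.2
      intro d hd
      obtain ⟨n, hn⟩ := hcof d hd
      exact hn.trans (hx ⟨n, rfl⟩)
  have hf := hchain (fun n => (g n).1) hgm s hglub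
  constructor
  · rintro y ⟨d, hd, rfl⟩
    obtain ⟨n, hn⟩ := hcof d hd
    exact (hmono hn).trans (hf.1 ⟨n, rfl⟩)
  · intro x hx
    apply hf.2
    rintro y ⟨n, rfl⟩
    exact hx (Set.mem_image_of_mem f (g n).2)
end

section
/- Let C be a complete lattice and (f_i)_{i∈G} a family of space functions (join-preserving maps) on C. For I ⊆ G, let Δ_I denote the greatest space function below f_i for all i ∈ I (which exists since the space functions form a complete lattice under the pointwise order). Then: (1) Δ_∅ is the map sending ⊥ to ⊥ and every other element to ⊤; (2) Δ_{i} = f_i for singletons; (3) for J, K ⊆ I, Δ_J(a) ⊔ Δ_K(b) ⊒ Δ_I(a ⊔ b) for all a, b ∈ C. -/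
/-- A self-map of a complete lattice preserving arbitrary joins. -/
def SpaceFun {C : Type*} [CompleteLattice C] (f : C → C) : Prop :=
  ∀ S : Set C, f (sSup S) = sSup (f '' S)

lemma spaceFun_bot {C : Type*} [CompleteLattice C] {f : C → C} (hf : SpaceFun f) :
    f ⊥ = ⊥ := by
  have := hf ∅
  simpa using this

lemma spaceFun_sup {C : Type*} [CompleteLattice C] {f : C → C} (hf : SpaceFun f)
    (a b : C) : f (a ⊔ b) = f a ⊔ f b := by
  have := hf {a, b}
  simpa [Set.image_pair] using this

open Classical in
noncomputable def gfun {C : Type*} [CompleteLattice C] : C → C :=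
  fun x => if x = ⊥ then ⊥ else ⊤

lemma spaceFun_g {C : Type*} [CompleteLattice C] :
    SpaceFun (gfun : C → C) := by
  intro S
  by_cases h : sSup S = ⊥
  · rw [gfun, if_pos h]
    symm
    rw [sSup_eq_bot]
    rintro x ⟨y, hy, rfl⟩
    have hyb : y = ⊥ := le_bot_iff.mp (h ▸ le_sSup hy)
    simp [gfun, hyb]
  · rw [gfun, if_neg h]
    have hex : ∃ y ∈ S, y ≠ ⊥ := by
      by_contra hc
      push_neg at hc
      exact h (sSup_eq_bot.mpr fun y hy => hc y hy)
    obtain ⟨y, hy, hyb⟩ := hex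
    refine le_antisymm (le_sSup ?_) le_top
    exact ⟨y, hy, by simp [gfun, hyb]⟩

/-- Basic properties of distributed spaces: (1) the empty group's distributed
space sends ⊥ to ⊥ and everything else to ⊤; (2) singleton groups give the
agent's space function; (3) subgroups J, K of I satisfy
Δ_J(a) ⊔ Δ_K(b) ⊒ Δ_I(a ⊔ b). -/
theorem stmt_6 {C G : Type*} [CompleteLattice C] (f : G → C → C)
    (hf : ∀ i, SpaceFun (f i)) (Δ : Set G → C → C)
    (hΔ : ∀ I : Set G, IsGreatest {g | SpaceFun g ∧ ∀ i ∈ I, g ≤ f i} (Δ I)) :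
    (Δ ∅ ⊥ = ⊥ ∧ ∀ c : C, c ≠ ⊥ → Δ ∅ c = ⊤) ∧
    (∀ i : G, Δ {i} = f i) ∧
    (∀ I J K : Set G, J ⊆ I → K ⊆ I → ∀ a b : C, Δ I (a ⊔ b) ≤ Δ J a ⊔ Δ K b) := by
  refine ⟨⟨spaceFun_bot (hΔ ∅).1.1, fun c hc => ?_⟩, fun i => ?_, ?_⟩
  · refine le_antisymm le_top ?_
    have hg : (gfun : C → C) ≤ Δ ∅ :=
      (hΔ ∅).2 ⟨spaceFun_g, fun i hi => absurd hi (Set.notMem_empty i)⟩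
    have := hg c
    simpa [gfun, hc] using this
  · refine le_antisymm ((hΔ {i}).1.2 i rfl) ?_
    exact (hΔ {i}).2 ⟨hf i, fun j hj => by rw [Set.mem_singleton_iff] at hj; subst hj; rfl⟩
  · intro I J K hJ hK a b
    have hI := (hΔ I).1
    have hIJ : Δ I ≤ Δ J := (hΔ J).2 ⟨hI.1, fun i hi => hI.2 i (hJ hi)⟩
    have hIK : Δ I ≤ Δ K := (hΔ K).2 ⟨hI.1, fun i hi => hI.2 i (hK hi)⟩
    rw [spaceFun_sup hI.1]
    exact sup_le_sup (hIJ a) (hIK b)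
end

section
/- Let C be a complete lattice with a family of space functions (f_i)_{i∈G} and distributed spaces (Δ_I)_{I⊆G} defined as Δ_I = max{g space function | g ⊑ f_i for all i ∈ I}. Then (Δ_I) is the greatest group distribution candidate: (a) each Δ_I is a space function, Δ_{i} = f_i, and I ⊆ J implies Δ_I ⊒ Δ_J pointwise; (b) if (d_I)_{I⊆G} is any family of self-maps satisfying these three properties, then d_I ⊑ Δ_I pointwise for each I ⊆ G. -/
/-- Distributed spaces form the greatest group distribution candidate:
(a) each Δ_I is a space function, Δ_{i} = f_i, and I ⊆ J implies Δ_I ⊒ Δ_J;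
(b) any family of self-maps with those three properties is pointwise below Δ. -/
theorem stmt_7 {C G : Type*} [CompleteLattice C] (f : G → C → C)
    (hf : ∀ i, SpaceFun (f i)) (Δ : Set G → C → C)
    (hΔ : ∀ I : Set G, IsGreatest {g | SpaceFun g ∧ ∀ i ∈ I, g ≤ f i} (Δ I)) :
    ((∀ I : Set G, SpaceFun (Δ I)) ∧ (∀ i : G, Δ {i} = f i) ∧
      (∀ I J : Set G, I ⊆ J → ∀ c : C, Δ J c ≤ Δ I c)) ∧
    (∀ d : Set G → C → C, (∀ I, SpaceFun (d I)) → (∀ i : G, d {i} = f i) →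
      (∀ I J : Set G, I ⊆ J → ∀ c : C, d J c ≤ d I c) →
      ∀ (I : Set G) (c : C), d I c ≤ Δ I c) := by
  refine ⟨⟨fun I => (hΔ I).1.1, fun i => ?_, fun I J hIJ c => ?_⟩, fun d hd1 hd2 hd3 I c => ?_⟩
  · exact le_antisymm ((hΔ {i}).1.2 i rfl) ((hΔ {i}).2 ⟨hf i, fun j hj => by simp_all⟩)
  · exact (hΔ I).2 ⟨(hΔ J).1.1, fun i hi => (hΔ J).1.2 i (hIJ hi)⟩ c
  · exact (hΔ I).2 ⟨hd1 I, fun i hi => fun x => (hd3 {i} I (by simpa) x).trans_eq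
      (congrFun (hd2 i) x)⟩ c
end

section
/- Let C be a complete lattice with space functions (f_i)_{i∈G} and distributed spaces (Δ_I)_{I⊆G}. Suppose c ⊒ Δ_I(e), e is a compact element of C, and e is I-join derivable from c, i.e., ⋁_{i∈I} π_i(c) ⊒ e where π_i(c) = ⋁{d | c ⊒ f_i(d)}. Then there exists a finite subset J ⊆ I such that c ⊒ Δ_J(e). -/
lemma SpaceFun.monotone {C : Type*} [CompleteLattice C] {g : C → C}
    (hg : SpaceFun g) : Monotone g := by
  intro x y hxy
  have h2 := hg {x, y}
  rw [Set.image_pair, sSup_pair, sSup_pair, sup_eq_right.mpr hxy] at h2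
  rw [h2]; exact le_sup_left

/-- Group compactness: if e is compact, c ⊒ Δ_I(e) and e is I-join derivable
from c, then c ⊒ Δ_J(e) for some finite J ⊆ I. -/
theorem stmt_10 {C G : Type*} [CompleteLattice C] (f : G → C → C)
    (hf : ∀ i, SpaceFun (f i)) (Δ : Set G → C → C)
    (hΔ : ∀ I : Set G, IsGreatest {g | SpaceFun g ∧ ∀ i ∈ I, g ≤ f i} (Δ I))
    (I : Set G) (c e : C)
    (hcomp : ∀ D : Set C, D.Nonempty → DirectedOn (· ≤ ·) D → e ≤ sSup D →
      ∃ d ∈ D, e ≤ d)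
    (hde : Δ I e ≤ c)
    (hjoin : e ≤ ⨆ i ∈ I, sSup {d | f i d ≤ c}) :
    ∃ J : Set G, J ⊆ I ∧ J.Finite ∧ Δ J e ≤ c := by
  classical
  set π : G → C := fun i => sSup {d | f i d ≤ c} with hπ
  have hfπ : ∀ i, f i (π i) ≤ c := by
    intro i
    rw [hπ]
    simp only
    rw [hf i]
    refine sSup_le ?_
    rintro x ⟨d, hd, rfl⟩
    exact hd
  set D : Set C := (fun J : Finset G => ⨆ i ∈ J, π i) '' {J : Finset G | ↑J ⊆ I}
    with hD
  have hne : D.Nonempty := ⟨_, ⟨(∅ : Finset G), by simp, rfl⟩⟩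
  have hdir : DirectedOn (· ≤ ·) D := by
    rintro _ ⟨J₁, h₁, rfl⟩ _ ⟨J₂, h₂, rfl⟩
    refine ⟨_, ⟨J₁ ∪ J₂, ?_, rfl⟩, ?_, ?_⟩
    · simp only [Set.mem_setOf_eq, Finset.coe_union, Set.union_subset_iff]
      exact ⟨h₁, h₂⟩
    · exact biSup_mono fun i hi => Finset.mem_union_left _ hi
    · exact biSup_mono fun i hi => Finset.mem_union_right _ hi
  have hle : e ≤ sSup D := by
    refine hjoin.trans (iSup₂_le fun i hi => ?_)
    refine le_sSup_of_le ⟨{i}, by simpa using hi, rfl⟩ ?_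
    simp [hπ]
  obtain ⟨_, ⟨J, hJI, rfl⟩, heJ⟩ := hcomp D hne hdir hle
  refine ⟨↑J, hJI, J.finite_toSet, ?_⟩
  have hsp : SpaceFun (Δ (↑J : Set G)) := (hΔ _).1.1
  have hb : ∀ i ∈ (↑J : Set G), Δ (↑J : Set G) ≤ f i := (hΔ _).1.2
  have key : Δ (↑J : Set G) (⨆ i ∈ J, π i) ≤ c := by
    have h1 : (⨆ i ∈ J, π i) = sSup (π '' ↑J) := by
      rw [sSup_image]
      simp
    rw [h1, hsp]
    refine sSup_le ?_
    rintro _ ⟨_, ⟨i, hi, rfl⟩, rfl⟩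
    exact (hb i hi (π i)).trans (hfπ i)
  exact (hsp.monotone heJ).trans key
end

section
/- There exists a complete lattice C with a countable family of space functions (f_n)_{n∈ℕ}, elements c, e ∈ C with e compact and c ⊒ Δ_I(e) for an infinite index set I, but with c ⋢ Δ_J(e) for every finite J ⊆ I. Concretely: take C = {0, 1/2} ∪ {1/2 + 1/(2n) | n ≥ 1} with the usual order of reals, f_0 ≡ 0, and for n ≥ 1 let f_n(x) = 1/2 + 1/(2n) if x ≥ 1/2 and f_n(x) = 0 otherwise; then with I = ℕ∖{0} and c = e = 1/2, e is compact, c ≥ Δ_I(e), but c < Δ_J(e) for all finite nonempty J ⊆ I. -/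
/-!
For finite `J` the meet is attained: the `f n` decrease in `n ≥ 1`, so for finite `J` the
space function `f (max J)` lies below all `f i` with `i ∈ J`, and `Δ_J(1/2) ≥ f_{max J}(1/2) > 1/2`.
For the whole of `I` no such witness exists: a space function below every `f n` sends `1/2` below
`inf_n (1/2 + 1/(2n)) = 1/2`. Compactness of `1/2` holds because every nonzero element lies above it.
-/

open Set OrderDual

section SpaceFunctions

variable {α β : Type*} [CompleteLattice α] [CompleteLattice β]

theorem sSup_map_sSup_of_forall {s : Set (α → β)}
    (hs : ∀ g ∈ s, ∀ S : Set α, g (sSup S) = sSup (g '' S)) (S : Set α) :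
    sSup s (sSup S) = sSup (sSup s '' S) := by
  simp only [sSup_apply, sSup_image, fun g : s => hs g g.2 S]
  exact iSup_comm.trans (iSup_congr fun _ => iSup_comm)

open scoped Classical in
noncomputable def stepFun (b : β) (x : α) : β := if x = ⊥ then ⊥ else b

theorem stepFun_le (b : β) (x : α) : stepFun b x ≤ b := by
  unfold stepFun; split_ifs <;> simp

theorem stepFun_of_ne_bot (b : β) {x : α} (hx : x ≠ ⊥) : stepFun b x = b := by
  simp [stepFun, hx]

theorem stepFun_sSup (b : β) (S : Set α) :
    stepFun b (sSup S) = sSup (stepFun b '' S) := by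
  by_cases hS : ∀ x ∈ S, x = ⊥
  · have : stepFun b '' S ⊆ {⊥} := by
      rintro _ ⟨x, hx, rfl⟩
      simp [stepFun, hS x hx]
    simp [stepFun, sSup_eq_bot.2 hS, sSup_eq_bot.2 this]
  · obtain ⟨x, hxS, hx⟩ : ∃ x ∈ S, x ≠ ⊥ := by simpa using hS
    rw [stepFun_of_ne_bot b (ne_bot_of_le_ne_bot hx (le_sSup hxS))]
    exact le_antisymm (le_sSup ⟨x, hxS, stepFun_of_ne_bot b hx⟩)
      (sSup_le <| forall_mem_image.2 fun y _ => stepFun_le b y)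

theorem isCompactElement_of_forall_ne_bot_le {e : α} (he : ∀ x, x ≠ ⊥ → e ≤ x) :
    IsCompactElement e := by
  rw [CompleteLattice.isCompactElement_iff_le_of_directed_sSup_le]
  intro D ⟨d, hd⟩ _ heD
  rcases eq_or_ne e ⊥ with rfl | he0
  · exact ⟨d, hd, bot_le⟩
  · obtain ⟨x, hx, hx0⟩ : ∃ x ∈ D, x ≠ ⊥ := by
      by_contra! h
      exact he0 (le_bot_iff.1 (heD.trans_eq (sSup_eq_bot.2 h)))
    exact ⟨x, hx, he x hx0⟩

def spaceFunctionsBelow {ι : Type*} (f : ι → α → α) (J : Set ι) : Set (α → α) :=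
  {g | (∀ S : Set α, g (sSup S) = sSup (g '' S)) ∧ ∀ i ∈ J, g ≤ f i}

def spaceMeet {ι : Type*} (f : ι → α → α) (J : Set ι) : α → α :=
  sSup (spaceFunctionsBelow f J)

theorem isGreatest_spaceMeet {ι : Type*} (f : ι → α → α) (J : Set ι) :
    IsGreatest (spaceFunctionsBelow f J) (spaceMeet f J) :=
  ⟨⟨sSup_map_sSup_of_forall fun _ hg => hg.1, fun i hi => sSup_le fun _ hg => hg.2 i hi⟩,
    fun _ hg => le_sSup hg⟩

end SpaceFunctions

namespace NonCompact

/-- `WithBot ℕ∞ᵒᵈ` models `{0} ∪ {1/2 + 1/(2n) : n ∈ ℕ∞}`, with `⊥ = 0` and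
`level n = 1/2 + 1/(2n)`; so `level ⊤ = 1/2`, and `level 0` is an extra top element that no
`f n` reaches. -/
abbrev C : Type := WithBot ℕ∞ᵒᵈ

def level (n : ℕ∞) : C := WithBot.some (toDual n)

noncomputable def f (n : ℕ) : C → C := if n = 0 then ⊥ else stepFun (level n)

theorem f_sSup (n : ℕ) (S : Set C) : f n (sSup S) = sSup (f n '' S) := by
  unfold f
  split_ifs
  · exact (sSup_eq_bot.2 <| forall_mem_image.2 fun _ _ => rfl).symm
  · exact stepFun_sSup _ S

theorem level_le_level {m n : ℕ∞} : level m ≤ level n ↔ n ≤ m :=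
  WithBot.coe_le_coe.trans toDual_le_toDual

theorem level_lt_level {m n : ℕ∞} : level m < level n ↔ n < m :=
  WithBot.coe_lt_coe.trans toDual_lt_toDual

theorem antitoneOn_f : AntitoneOn f (Ici 1) := by
  intro i hi n hn hin x
  simp only [f, Nat.one_le_iff_ne_zero.1 hi, Nat.one_le_iff_ne_zero.1 hn, if_false]
  unfold stepFun
  split_ifs
  · exact le_rfl
  · exact level_le_level.2 (Nat.cast_le.2 hin)

theorem f_level_top {n : ℕ} (hn : n ≠ 0) : f n (level ⊤) = level n := by
  simp [f, hn, stepFun_of_ne_bot, level]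

theorem eq_bot_or_level_top_le (x : C) : x = ⊥ ∨ level ⊤ ≤ x := by
  induction x using WithBot.recBotCoe with
  | bot => exact .inl rfl
  | coe y => exact .inr (WithBot.coe_le_coe.2 (toDual_le.2 le_top))

theorem isCompactElement_level_top : IsCompactElement (level ⊤) :=
  isCompactElement_of_forall_ne_bot_le fun x hx => (eq_bot_or_level_top_le x).resolve_left hx

theorem le_level_top_of_forall_le_level {x : C} (hx : ∀ n : ℕ, n ≠ 0 → x ≤ level n) :
    x ≤ level ⊤ := by
  induction x using WithBot.recBotCoe with
  | bot => exact bot_le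
  | coe y =>
    have : ofDual y = ⊤ := ENat.eq_top_iff_forall_gt.2 fun m => by
      have := hx (m + 1) m.succ_ne_zero
      rw [level, WithBot.coe_le_coe, le_toDual] at this
      exact_mod_cast (Nat.cast_lt.2 m.lt_succ_self).trans_le this
    exact WithBot.coe_le_coe.2 (le_toDual.2 this.ge)

theorem spaceMeet_level_top_le : spaceMeet f (Ici 1) (level ⊤) ≤ level ⊤ :=
  iSup_le fun ⟨_, hg⟩ => le_level_top_of_forall_le_level fun n hn =>
    (hg.2 n (Nat.one_le_iff_ne_zero.2 hn) _).trans_eq (f_level_top hn)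

theorem level_top_lt_spaceMeet {J : Set ℕ} (hJ : J ⊆ Ici 1) (hfin : J.Finite)
    (hne : J.Nonempty) : level ⊤ < spaceMeet f J (level ⊤) := by
  have hN : sSup J ∈ J := Nat.sSup_mem hne hfin.bddAbove
  have hfN : f (sSup J) ∈ spaceFunctionsBelow f J :=
    ⟨f_sSup _, fun i hi => antitoneOn_f (hJ hi) (hJ hN) (le_csSup hfin.bddAbove hi)⟩
  calc level ⊤ < level (sSup J : ℕ) := level_lt_level.2 (ENat.natCast_lt_top _)
    _ = f (sSup J) (level ⊤) := (f_level_top (Nat.one_le_iff_ne_zero.1 (hJ hN))).symm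
    _ ≤ spaceMeet f J (level ⊤) := (isGreatest_spaceMeet f J).2 hfN _

end NonCompact

/-- Non-compactness: there is a complete lattice with a countable family of
space functions, a compact element e and an element c with c ⊒ Δ_I(e) for an
infinite I, but c ⋢ Δ_J(e) (indeed c < Δ_J(e)) for every finite nonempty
J ⊆ I. -/
theorem stmt_11 :
    ∃ (C : Type) (_ : CompleteLattice C) (f : ℕ → C → C) (Δ : Set ℕ → C → C)
      (c e : C) (I : Set ℕ),
      (∀ n, ∀ S : Set C, f n (sSup S) = sSup (f n '' S)) ∧
      (∀ J : Set ℕ, IsGreatest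
        {g : C → C | (∀ S : Set C, g (sSup S) = sSup (g '' S)) ∧ ∀ i ∈ J, g ≤ f i}
        (Δ J)) ∧
      I.Infinite ∧
      (∀ D : Set C, D.Nonempty → DirectedOn (· ≤ ·) D → e ≤ sSup D →
        ∃ d ∈ D, e ≤ d) ∧
      Δ I e ≤ c ∧
      (∀ J : Set ℕ, J ⊆ I → J.Finite → J.Nonempty → c < Δ J e) :=
  ⟨NonCompact.C, inferInstance, NonCompact.f, spaceMeet NonCompact.f, NonCompact.level ⊤,
    NonCompact.level ⊤, Ici 1, NonCompact.f_sSup, isGreatest_spaceMeet NonCompact.f,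
    Ici_infinite 1,
    (CompleteLattice.isCompactElement_iff_le_of_directed_sSup_le _ _).1
      NonCompact.isCompactElement_level_top,
    NonCompact.spaceMeet_level_top_le, fun _ => NonCompact.level_top_lt_spaceMeet⟩
end

section
/- Let C be a completely distributive complete lattice with space functions (f_i)_{i∈G}, Δ_I the greatest space function below all f_i for i ∈ I, and ⊖ the co-Heyting subtraction c ⊖ a := ⋀{e | a ⊔ e ⊒ c}. If I = J ∪ K then Δ_I(c) = ⋀{ Δ_J(a) ⊔ Δ_K(c ⊖ a) | a ∈ C } and also Δ_I(c) = ⋀{ Δ_J(a) ⊔ Δ_K(c ⊖ a) | a ∈ C, a ⊑ c }. -/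
section Aux

variable {C : Type*} [CompleteLattice C]

lemma SpaceFun.sup {f : C → C} (hf : SpaceFun f) (a b : C) :
    f (a ⊔ b) = f a ⊔ f b := by
  have h := hf {a, b}
  rw [sSup_pair, Set.image_pair, sSup_pair] at h
  exact h

lemma SpaceFun.mono {f : C → C} (hf : SpaceFun f) : Monotone f := by
  intro a b hab
  have h := hf.sup a b
  rw [sup_eq_right.2 hab] at h
  rw [h]; exact le_sup_left

lemma SpaceFun.bot {f : C → C} (hf : SpaceFun f) : f ⊥ = ⊥ := by
  have h := hf ∅
  simpa using h

lemma SpaceFun.isup {f : C → C} (hf : SpaceFun f) {ι : Sort*} (x : ι → C) :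
    f (⨆ i, x i) = ⨆ i, f (x i) := by
  show f (sSup (Set.range x)) = _
  rw [hf, ← Set.range_comp]
  rfl

/-- co-Heyting subtraction -/
noncomputable def dsub (c a : C) : C := sInf {e | c ≤ a ⊔ e}

lemma dsub_le {c a e : C} (h : c ≤ a ⊔ e) : dsub c a ≤ e := sInf_le h

lemma dsub_mono {c c' : C} (a : C) (h : c ≤ c') : dsub c a ≤ dsub c' a :=
  sInf_le_sInf fun e he => h.trans he

lemma dsub_self (c : C) : dsub c c = ⊥ :=
  le_bot_iff.1 (dsub_le (by simp))

lemma dsub_bot (c : C) : dsub c ⊥ ≤ c := dsub_le (by simp)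

end Aux

section Coframe

variable {C : Type*} [Order.Coframe C]

lemma dsub_inf (c a : C) : dsub c (a ⊓ c) = dsub c a := by
  unfold dsub
  congr 1
  ext e
  constructor
  · intro h; exact h.trans (sup_le_sup_right inf_le_left e)
  · intro h
    simp only [Set.mem_setOf_eq] at h ⊢
    rw [sup_inf_right]
    exact le_inf h le_sup_left

lemma le_sup_dsub (c a : C) : c ≤ a ⊔ dsub c a := by
  rw [dsub, sup_sInf_eq]
  exact le_iInf₂ fun e he => he

end Coframe

/-- Compositionality via co-Heyting subtraction c ⊖ a = ⋀{e | a ⊔ e ⊒ c}: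
if I = J ∪ K then Δ_I(c) = ⋀{ Δ_J(a) ⊔ Δ_K(c ⊖ a) | a ∈ C } and
Δ_I(c) = ⋀{ Δ_J(a) ⊔ Δ_K(c ⊖ a) | a ⊑ c }. -/
theorem stmt_15 {C G : Type*} [CompletelyDistribLattice C] (f : G → C → C)
    (hf : ∀ i, SpaceFun (f i)) (Δ : Set G → C → C)
    (hΔ : ∀ I : Set G, IsGreatest {g | SpaceFun g ∧ ∀ i ∈ I, g ≤ f i} (Δ I))
    (I J K : Set G) (hI : I = J ∪ K) :
    ∀ c : C,
      Δ I c = sInf {d | ∃ a : C, d = Δ J a ⊔ Δ K (sInf {e | c ≤ a ⊔ e})} ∧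
      Δ I c = sInf {d | ∃ a : C, a ≤ c ∧ d = Δ J a ⊔ Δ K (sInf {e | c ≤ a ⊔ e})} := by
  -- basic facts about Δ
  have hsfI : SpaceFun (Δ I) := (hΔ I).1.1
  have hsfJ : SpaceFun (Δ J) := (hΔ J).1.1
  have hsfK : SpaceFun (Δ K) := (hΔ K).1.1
  have hIJ : Δ I ≤ Δ J := by
    refine (hΔ J).2 ⟨hsfI, fun i hi => (hΔ I).1.2 i ?_⟩
    rw [hI]; exact Or.inl hi
  have hIK : Δ I ≤ Δ K := by
    refine (hΔ K).2 ⟨hsfI, fun i hi => (hΔ I).1.2 i ?_⟩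
    rw [hI]; exact Or.inr hi
  -- the term function
  set t : C → C → C := fun c a => Δ J a ⊔ Δ K (dsub c a) with ht
  have hset : ∀ c : C, {d | ∃ a : C, d = Δ J a ⊔ Δ K (sInf {e | c ≤ a ⊔ e})}
      = Set.range (t c) := by
    intro c
    ext d
    simp only [Set.mem_setOf_eq, Set.mem_range, ht, dsub, eq_comm]
  set g : C → C := fun c => ⨅ a : C, t c a with hg
  have hgdef : ∀ c : C, sInf {d | ∃ a : C, d = Δ J a ⊔ Δ K (sInf {e | c ≤ a ⊔ e})} = g c := by
    intro c; rw [hset c, sInf_range]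
  -- Δ I c ≤ t c a for every a
  have hle : ∀ c a : C, Δ I c ≤ t c a := by
    intro c a
    calc Δ I c ≤ Δ I (a ⊔ dsub c a) := hsfI.mono (le_sup_dsub c a)
    _ = Δ I a ⊔ Δ I (dsub c a) := hsfI.sup _ _
    _ ≤ Δ J a ⊔ Δ K (dsub c a) := sup_le_sup (hIJ a) (hIK _)
  -- g is a space function
  have hgsf : SpaceFun g := by
    intro S
    apply le_antisymm
    · -- hard direction via complete distributivity
      have h1 : sSup (g '' S) = ⨆ c : S, g (c : C) := by
        rw [sSup_image']
      rw [h1]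
      simp only [hg]
      rw [iSup_iInf_eq]
      refine le_iInf fun φ => ?_
      set a₀ : C := ⨆ c : S, φ c with ha₀
      refine (iInf_le _ a₀).trans ?_
      have hJa : Δ J a₀ ≤ ⨆ c : S, t (c : C) (φ c) := by
        rw [ha₀, hsfJ.isup]
        exact iSup_mono fun c => le_sup_left
      have hKa : Δ K (dsub (sSup S) a₀) ≤ ⨆ c : S, t (c : C) (φ c) := by
        have hd : dsub (sSup S) a₀ ≤ ⨆ c : S, dsub (c : C) (φ c) := by
          apply dsub_le
          rw [← iSup_sup_eq]
          rw [sSup_eq_iSup']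
          exact iSup_mono fun c => le_sup_dsub _ _
        calc Δ K (dsub (sSup S) a₀) ≤ Δ K (⨆ c : S, dsub (c : C) (φ c)) := hsfK.mono hd
        _ = ⨆ c : S, Δ K (dsub (c : C) (φ c)) := hsfK.isup _
        _ ≤ ⨆ c : S, t (c : C) (φ c) := iSup_mono fun c => le_sup_right
      exact sup_le hJa hKa
    · -- easy direction: g is monotone
      refine sSup_le fun d hd => ?_
      obtain ⟨c, hcS, rfl⟩ := hd
      refine le_iInf fun a => (iInf_le _ a).trans ?_
      exact sup_le_sup_left (hsfK.mono (dsub_mono a (le_sSup hcS))) _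
  -- g ≤ f i for i ∈ I
  have hgf : ∀ i ∈ I, g ≤ f i := by
    intro i hi
    rw [hI] at hi
    intro c
    rcases hi with hi | hi
    · refine (iInf_le _ c).trans ?_
      simp only [ht, dsub_self, hsfK.bot, sup_bot_eq]
      exact (hΔ J).1.2 i hi c
    · refine (iInf_le _ ⊥).trans ?_
      simp only [ht, hsfJ.bot, bot_sup_eq]
      exact (hsfK.mono (dsub_bot c)).trans ((hΔ K).1.2 i hi c)
  have hgI : g ≤ Δ I := (hΔ I).2 ⟨hgsf, hgf⟩
  -- first equality
  have heq1 : ∀ c : C, Δ I c = g c := fun c =>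
    le_antisymm (le_iInf fun a => hle c a) (hgI c)
  intro c
  refine ⟨by rw [hgdef, heq1], ?_⟩
  -- second equality
  apply le_antisymm
  · refine le_sInf fun d hd => ?_
    obtain ⟨a, _, rfl⟩ := hd
    have := hle c a
    simpa [ht, dsub] using this
  · rw [heq1, hg]
    refine le_iInf fun a => ?_
    have h1 : dsub c (a ⊓ c) = dsub c a := dsub_inf c a
    have hm : Δ J (a ⊓ c) ⊔ Δ K (sInf {e | c ≤ a ⊓ c ⊔ e})
        ∈ {d | ∃ b : C, b ≤ c ∧ d = Δ J b ⊔ Δ K (sInf {e | c ≤ b ⊔ e})} :=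
      ⟨a ⊓ c, inf_le_right, rfl⟩
    refine (sInf_le hm).trans ?_
    simp only [ht]
    rw [show sInf {e | c ≤ a ⊓ c ⊔ e} = dsub c a from h1]
    exact sup_le_sup_right (hsfJ.mono inf_le_left) _
end

section
/- Let M be an abelian group and A, B, X ⊆ M. Then X ⊕ (A ∩ B) = ⋂_{Y ⊆ X} [ (Y ⊕ A) ∪ ((X ∖ Y) ⊕ B) ], where ⊕ denotes Minkowski addition. Equivalently, the greatest union-preserving self-map of P(M) pointwise below both dilations δ_A and δ_B is the dilation δ_{A∩B}. -/
open Pointwise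

/-- X ⊕ (A ∩ B) = ⋂_{Y ⊆ X} [(Y ⊕ A) ∪ ((X ∖ Y) ⊕ B)]; equivalently the
greatest union-preserving self-map of P(M) pointwise below the dilations δ_A
and δ_B is the dilation δ_{A∩B}. -/
theorem stmt_19 {M : Type*} [AddCommGroup M] (A B X : Set M) :
    X + (A ∩ B) = (⋂ Y ∈ {Y : Set M | Y ⊆ X}, ((Y + A) ∪ ((X \ Y) + B))) ∧
    IsGreatest {f : Set M → Set M |
        (∀ T : Set (Set M), f (⋃₀ T) = ⋃ Z ∈ T, f Z) ∧
        (∀ Z : Set M, f Z ⊆ Z + A) ∧ (∀ Z : Set M, f Z ⊆ Z + B)}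
      (fun Z => Z + (A ∩ B)) := by
  constructor
  · ext z
    simp only [Set.mem_iInter, Set.mem_setOf_eq]
    constructor
    · rintro ⟨x, hx, c, ⟨hca, hcb⟩, rfl⟩ Y hY
      by_cases h : x ∈ Y
      · exact Or.inl ⟨x, h, c, hca, rfl⟩
      · exact Or.inr ⟨x, ⟨hx, h⟩, c, hcb, rfl⟩
    · intro h
      rcases h {x | x ∈ X ∧ z - x ∉ A} (fun x hx => hx.1) with h1 | h2
      · rcases h1 with ⟨y, hy, a, ha, rfl⟩
        exact absurd (by simpa using ha) hy.2
      · rcases h2 with ⟨x, hx, b, hb, rfl⟩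
        have hA : (x + b) - x ∈ A := by
          by_contra hc
          exact hx.2 ⟨hx.1, hc⟩
        exact ⟨x, hx.1, b, ⟨by simpa using hA, hb⟩, rfl⟩
  · constructor
    · exact ⟨fun T => Set.sUnion_add T _,
        fun Z => Set.add_subset_add_left Set.inter_subset_left,
        fun Z => Set.add_subset_add_left Set.inter_subset_right⟩
    · rintro f ⟨hu, hA, hB⟩ Z z hz
      have hZ : Z = ⋃₀ ((fun x => ({x} : Set M)) '' Z) := by
        ext w; simp
      rw [hZ, hu] at hz
      simp only [Set.mem_iUnion, Set.mem_image] at hz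
      obtain ⟨S, ⟨x, hxZ, rfl⟩, hzS⟩ := hz
      obtain ⟨x', hx', a, ha, hax⟩ := hA _ hzS
      obtain ⟨x'', hx'', b, hb, hbx⟩ := hB _ hzS
      simp only [Set.mem_singleton_iff] at hx' hx''
      rw [hx'] at hax
      rw [hx''] at hbx
      have : a = b := by
        have := hax.trans hbx.symm
        exact add_left_cancel this
      exact ⟨x, hxZ, a, ⟨ha, this ▸ hb⟩, hax⟩
end
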